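/- Second-order expansion of the L^q norm at the constant function: let (X,μ) be a measure space with 0 < μ(X) < ∞ and let q > 2. Then for every ε > 0 there exists δ > 0 such that for every real-valued φ ∈ L^q(μ) with ∫ φ dμ = 0 and ‖φ‖_{L^q} ≤ δ, one has | ‖1+φ‖_{L^q}² − μ(X)^{2/q} − (q−1)·μ(X)^{2/q−1}·‖φ‖_{L²}² | ≤ ε ‖φ‖_{L^q}². -/

import Mathlib

/-!
With `m = μ(X)` and `A = ∫ |1 + φ|^q`, the pointwise expansion
`|1 + t|^q = 1 + q t + q(q-1)/2 t² + o(t²) + O(|t|^q)`, integrated against a mean-zero `φ`,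
gives `A = m + q(q-1)/2 ‖φ‖₂² + o(‖φ‖_q²)`: indeed `‖φ‖₂ ≤ m^(1/2 - 1/q) ‖φ‖_q` by Hölder,
and `‖φ‖_q^q = o(‖φ‖_q²)` because `q > 2`. Since `‖1 + φ‖_q² = A^(2/q)`, differentiating
`x ↦ x^(2/q)` at `m` turns this into the claimed expansion, with `(2/q) · q(q-1)/2 = q - 1`.
These estimates are little-o statements along any filter of mean-zero functions on which
`‖φ‖_q → 0`; the `ε`-`δ` form is the case of `comap ‖·‖_q (𝓝 0)` restricted to them.
-/

open MeasureTheory Set Filter Topology Asymptotics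

lemma isLittleO_sq_of_hasDerivAt_isLittleO {f f' : ℝ → ℝ}
    (hf : ∀ᶠ s in 𝓝 0, HasDerivAt f (f' s) s) (hf' : f' =o[𝓝 0] id) (h0 : f 0 = 0) :
    f =o[𝓝 0] fun t => t ^ 2 := by
  refine IsLittleO.of_bound fun c hc => ?_
  obtain ⟨r, hr, hball⟩ := Metric.eventually_nhds_iff_ball.mp (hf.and (hf'.def hc))
  filter_upwards [Metric.ball_mem_nhds 0 hr] with t ht
  have hsub : Metric.closedBall (0 : ℝ) ‖t‖ ⊆ Metric.ball 0 r :=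
    Metric.closedBall_subset_ball (by simpa using ht)
  have hmvt := (convex_closedBall (0 : ℝ) ‖t‖).norm_image_sub_le_of_norm_hasDerivWithin_le
    (fun s hs => (hball s (hsub hs)).1.hasDerivWithinAt)
    (fun s hs => (hball s (hsub hs)).2.trans
      (mul_le_mul_of_nonneg_left (by simpa using hs) hc.le))
    (Metric.mem_closedBall_self (norm_nonneg t)) (y := t) (by simp)
  simpa [h0, mul_assoc, ← sq] using hmvt

lemma isLittleO_rpow_one_add_sub_taylor (q : ℝ) :
    (fun t : ℝ => (1 + t) ^ q - 1 - q * t - q * (q - 1) / 2 * t ^ 2) =o[𝓝 0]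
      fun t => t ^ 2 := by
  have hderiv (s : ℝ) (hs : 1 + s ≠ 0) (p : ℝ) :
      HasDerivAt (fun t : ℝ => (1 + t) ^ p) (p * (1 + s) ^ (p - 1)) s := by
    simpa using ((hasDerivAt_id s).const_add 1).rpow_const (p := p) (Or.inl hs)
  have hne : ∀ᶠ s : ℝ in 𝓝 0, 1 + s ≠ 0 :=
    (continuous_const.add continuous_id).continuousAt.eventually_ne (by norm_num)
  refine isLittleO_sq_of_hasDerivAt_isLittleO
    (f' := fun s => q * (1 + s) ^ (q - 1) - q - q * (q - 1) * s) ?_ ?_ (by simp)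
  · filter_upwards [hne] with s hs
    exact ((((hderiv s hs q).sub_const 1).sub ((hasDerivAt_id' s).const_mul q)).sub
      ((hasDerivAt_pow 2 s).const_mul (q * (q - 1) / 2))).congr_deriv (by push_cast; ring)
  · have h := ((hderiv 0 (by norm_num) (q - 1)).const_mul q).sub_const q |>.sub
      ((hasDerivAt_id' (0 : ℝ)).const_mul (q * (q - 1)))
    simpa [Function.id_def] using hasDerivAt_iff_isLittleO_nhds_zero.mp h

lemma rpow_le_rpow_mul_rpow_of_le {r x a b : ℝ} (hr : 0 < r) (hrx : r ≤ x) (hab : a ≤ b) :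
    x ^ a ≤ r ^ (a - b) * x ^ b := by
  have hx : 0 < x := hr.trans_le hrx
  calc x ^ a = x ^ (a - b) * x ^ b := by rw [← Real.rpow_add hx, sub_add_cancel]
    _ ≤ r ^ (a - b) * x ^ b := mul_le_mul_of_nonneg_right
      (Real.rpow_le_rpow_of_nonpos hr hrx (sub_nonpos.2 hab)) (Real.rpow_nonneg hx.le b)

lemma abs_rpow_one_add_sub_taylor_le_of_le_abs {q r t : ℝ} (hq : 2 ≤ q) (hr : 0 < r)
    (ht : r ≤ |t|) :
    |(|1 + t| ^ q - 1 - q * t - q * (q - 1) / 2 * t ^ 2)| ≤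
      ((1 + r⁻¹) ^ q + r ^ (-q) + q * r ^ (1 - q) + q * (q - 1) / 2 * r ^ (2 - q)) *
        |t| ^ q := by
  have hq0 : 0 ≤ q := by linarith
  have hc : 0 ≤ q * (q - 1) / 2 := by nlinarith
  have h0 : 1 ≤ r ^ (-q) * |t| ^ q := by
    simpa using rpow_le_rpow_mul_rpow_of_le hr ht hq0
  have h1 : |t| ≤ r ^ (1 - q) * |t| ^ q := by
    simpa using rpow_le_rpow_mul_rpow_of_le hr ht (by linarith : (1 : ℝ) ≤ q)
  have h2 : t ^ 2 ≤ r ^ (2 - q) * |t| ^ q := by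
    simpa using rpow_le_rpow_mul_rpow_of_le hr ht hq
  have h3 : |1 + t| ^ q ≤ (1 + r⁻¹) ^ q * |t| ^ q := by
    have : |1 + t| ≤ (1 + r⁻¹) * |t| := by
      have : 1 ≤ r⁻¹ * |t| := by rw [inv_mul_eq_div, one_le_div hr]; exact ht
      linarith [abs_add_le 1 t, abs_one (α := ℝ)]
    rw [← Real.mul_rpow (by positivity) (abs_nonneg t)]
    exact Real.rpow_le_rpow (abs_nonneg _) this hq0
  have htri : |(|1 + t| ^ q - 1 - q * t - q * (q - 1) / 2 * t ^ 2)| ≤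
      |1 + t| ^ q + 1 + q * |t| + q * (q - 1) / 2 * t ^ 2 := by
    have := Real.rpow_nonneg (abs_nonneg (1 + t)) q
    rw [abs_le]
    constructor <;> nlinarith [le_abs_self t, neg_abs_le t, sq_nonneg t]
  nlinarith [mul_le_mul_of_nonneg_left h1 hq0, mul_le_mul_of_nonneg_left h2 hc]

lemma exists_abs_rpow_one_add_sub_taylor_le {q η : ℝ} (hq : 2 ≤ q) (hη : 0 < η) :
    ∃ C, ∀ t : ℝ,
      |(|1 + t| ^ q - 1 - q * t - q * (q - 1) / 2 * t ^ 2)| ≤ η * t ^ 2 + C * |t| ^ q := by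
  have hpos : ∀ᶠ t : ℝ in 𝓝 0, 0 < 1 + t :=
    continuousAt_const.eventually_lt (continuous_const.add continuous_id).continuousAt
      (by norm_num)
  have hsmall : ∀ᶠ t : ℝ in 𝓝 0,
      |(|1 + t| ^ q - 1 - q * t - q * (q - 1) / 2 * t ^ 2)| ≤ η * t ^ 2 := by
    filter_upwards [(isLittleO_rpow_one_add_sub_taylor q).def hη, hpos] with t ht ht'
    simpa [abs_of_pos ht'] using ht
  obtain ⟨r, hr, hball⟩ := Metric.eventually_nhds_iff.mp hsmall
  set C := (1 + r⁻¹) ^ q + r ^ (-q) + q * r ^ (1 - q) + q * (q - 1) / 2 * r ^ (2 - q) with hC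
  refine ⟨max C 0, fun t => ?_⟩
  have htq : 0 ≤ |t| ^ q := Real.rpow_nonneg (abs_nonneg t) q
  rcases lt_or_ge |t| r with htr | htr
  · have := hball (by simpa using htr)
    nlinarith [le_max_right C 0]
  · have := abs_rpow_one_add_sub_taylor_le_of_le_abs hq hr htr
    rw [← hC] at this
    nlinarith [mul_le_mul_of_nonneg_right (le_max_left C 0) htq, sq_nonneg t]

section

variable {X : Type*} [MeasurableSpace X] {μ : Measure X} {q : ℝ} {l : Filter (X → ℝ)}

lemma toReal_eLpNorm_ofReal_rpow {f : X → ℝ} (hq : 0 < q)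
    (hf : AEStronglyMeasurable f μ) (r : ℝ) :
    (eLpNorm f (ENNReal.ofReal q) μ).toReal ^ r = (∫ x, |f x| ^ q ∂μ) ^ (r / q) := by
  rw [toReal_eLpNorm hf, lpNorm_eq_integral_norm_rpow_toReal (by simpa using hq)
    ENNReal.ofReal_ne_top hf, ENNReal.toReal_ofReal hq.le,
    ← Real.rpow_mul (integral_nonneg fun x => by positivity), inv_mul_eq_div]
  simp only [Real.norm_eq_abs]

lemma toReal_eLpNorm_two_sq {f : X → ℝ} (hf : AEStronglyMeasurable f μ) :
    (eLpNorm f 2 μ).toReal ^ 2 = ∫ x, f x ^ 2 ∂μ := by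
  simpa using toReal_eLpNorm_ofReal_rpow two_pos hf 2

lemma isLittleO_integral_abs_rpow (hq : 2 < q) (hl : ∀ᶠ φ in l, AEStronglyMeasurable φ μ)
    (ht : Tendsto (fun φ => (eLpNorm φ (ENNReal.ofReal q) μ).toReal) l (𝓝 0)) :
    (fun φ => ∫ x, |φ x| ^ q ∂μ) =o[l] fun φ => (eLpNorm φ (ENNReal.ofReal q) μ).toReal ^ 2 := by
  have hsmall :
      Tendsto (fun φ => (eLpNorm φ (ENNReal.ofReal q) μ).toReal ^ (q - 2)) l (𝓝 0) := by
    simpa [Real.zero_rpow (by linarith : q - 2 ≠ 0)] using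
      ht.rpow_const (p := q - 2) (Or.inr (by linarith))
  have h := ((isLittleO_one_iff ℝ).2 hsmall).mul_isBigO
    (isBigO_refl (fun φ => (eLpNorm φ (ENNReal.ofReal q) μ).toReal ^ 2) l)
  simp only [one_mul] at h
  refine h.congr' ?_ EventuallyEq.rfl
  filter_upwards [hl] with φ hφ
  rw [← Real.rpow_two, ← Real.rpow_add' ENNReal.toReal_nonneg (by linarith), sub_add_cancel,
    toReal_eLpNorm_ofReal_rpow (by linarith) hφ, div_self (by linarith), Real.rpow_one]

variable [IsFiniteMeasure μ]

lemma integral_sq_le_measureReal_rpow_mul {f : X → ℝ} (hq : 2 ≤ q)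
    (hf : MemLp f (ENNReal.ofReal q) μ) :
    ∫ x, f x ^ 2 ∂μ ≤
      μ.real univ ^ (1 - 2 / q) * (eLpNorm f (ENNReal.ofReal q) μ).toReal ^ 2 := by
  have hq0 : 0 < q := by linarith
  have hexp : 0 ≤ 1 / 2 - 1 / q := by
    rw [sub_nonneg]; exact one_div_le_one_div_of_le two_pos hq
  have hholder := eLpNorm_le_eLpNorm_mul_rpow_measure_univ (p := 2) (q := ENNReal.ofReal q)
    (by rw [← ENNReal.ofReal_ofNat 2]; exact ENNReal.ofReal_le_ofReal hq)
    hf.aestronglyMeasurable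
  rw [ENNReal.toReal_ofReal hq0.le, ENNReal.toReal_ofNat] at hholder
  have hle := ENNReal.toReal_mono (ENNReal.mul_ne_top hf.eLpNorm_ne_top
    (ENNReal.rpow_ne_top_of_nonneg hexp (measure_ne_top μ univ))) hholder
  rw [ENNReal.toReal_mul, ← ENNReal.toReal_rpow] at hle
  rw [← toReal_eLpNorm_two_sq hf.aestronglyMeasurable, mul_comm]
  calc (eLpNorm f 2 μ).toReal ^ 2
      ≤ ((eLpNorm f (ENNReal.ofReal q) μ).toReal * μ.real univ ^ (1 / 2 - 1 / q)) ^ 2 := by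
        gcongr; exact hle
    _ = _ := by
        rw [mul_pow, ← Real.rpow_natCast (μ.real univ ^ _), ← Real.rpow_mul measureReal_nonneg]
        congr 2; push_cast; ring

lemma isBigO_integral_sq (hq : 2 ≤ q) (hl : ∀ᶠ φ in l, MemLp φ (ENNReal.ofReal q) μ) :
    (fun φ => ∫ x, φ x ^ 2 ∂μ) =O[l] fun φ => (eLpNorm φ (ENNReal.ofReal q) μ).toReal ^ 2 := by
  refine IsBigO.of_bound (μ.real univ ^ (1 - 2 / q)) ?_
  filter_upwards [hl] with φ hφ
  rw [Real.norm_of_nonneg (integral_nonneg fun x => sq_nonneg _),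
    Real.norm_of_nonneg (sq_nonneg _)]
  exact integral_sq_le_measureReal_rpow_mul hq hφ

lemma exists_abs_integral_rpow_one_add_sub_le {η : ℝ} (hq : 2 ≤ q) (hη : 0 < η) :
    ∃ C, ∀ φ : X → ℝ, MemLp φ (ENNReal.ofReal q) μ → ∫ x, φ x ∂μ = 0 →
      |∫ x, |1 + φ x| ^ q ∂μ - μ.real univ - q * (q - 1) / 2 * ∫ x, φ x ^ 2 ∂μ| ≤
        η * ∫ x, φ x ^ 2 ∂μ + C * ∫ x, |φ x| ^ q ∂μ := by
  obtain ⟨C, hC⟩ := exists_abs_rpow_one_add_sub_taylor_le hq hη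
  refine ⟨C, fun φ hφ hmean => ?_⟩
  have hq0 : ENNReal.ofReal q ≠ 0 := by simp; linarith
  have hφ2 : MemLp φ 2 μ := hφ.mono_exponent
    (by rw [← ENNReal.ofReal_ofNat 2]; exact ENNReal.ofReal_le_ofReal hq)
  have hint : Integrable φ μ := hφ2.integrable one_le_two
  have hint_sq : Integrable (fun x => φ x ^ 2) μ := hφ2.integrable_sq
  have hint_q : Integrable (fun x => |φ x| ^ q) μ := by
    simpa only [Real.norm_eq_abs, ENNReal.toReal_ofReal (by linarith : 0 ≤ q)] using
      hφ.integrable_norm_rpow hq0 ENNReal.ofReal_ne_top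
  have hone_add : MemLp (fun x => 1 + φ x) (ENNReal.ofReal q) μ :=
    (memLp_const (1 : ℝ)).add hφ
  have hint_one_add_q : Integrable (fun x => |1 + φ x| ^ q) μ := by
    simpa only [Real.norm_eq_abs, ENNReal.toReal_ofReal (by linarith : 0 ≤ q)] using
      hone_add.integrable_norm_rpow hq0 ENNReal.ofReal_ne_top
  have hI₁ : Integrable (fun x => |1 + φ x| ^ q - 1) μ :=
    hint_one_add_q.sub (integrable_const 1)
  have hI₂ : Integrable (fun x => |1 + φ x| ^ q - 1 - q * φ x) μ := hI₁.sub (hint.const_mul q)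
  have hI₃ : Integrable (fun x => |1 + φ x| ^ q - 1 - q * φ x - q * (q - 1) / 2 * φ x ^ 2) μ :=
    hI₂.sub (hint_sq.const_mul _)
  have hrem : ∫ x, |1 + φ x| ^ q ∂μ - μ.real univ - q * (q - 1) / 2 * ∫ x, φ x ^ 2 ∂μ =
      ∫ x, (|1 + φ x| ^ q - 1 - q * φ x - q * (q - 1) / 2 * φ x ^ 2) ∂μ := by
    rw [integral_sub hI₂ (hint_sq.const_mul _), integral_sub hI₁ (hint.const_mul q),
      integral_sub hint_one_add_q (integrable_const 1), integral_const, integral_const_mul,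
      integral_const_mul, hmean]
    simp
  rw [hrem, ← integral_const_mul, ← integral_const_mul,
    ← integral_add (hint_sq.const_mul _) (hint_q.const_mul _)]
  exact abs_integral_le_integral_abs.trans <| integral_mono hI₃.abs
    ((hint_sq.const_mul _).add (hint_q.const_mul _)) fun x => hC (φ x)

lemma isLittleO_integral_rpow_one_add_sub (hq : 2 < q)
    (hl : ∀ᶠ φ in l, MemLp φ (ENNReal.ofReal q) μ ∧ ∫ x, φ x ∂μ = 0)
    (ht : Tendsto (fun φ => (eLpNorm φ (ENNReal.ofReal q) μ).toReal) l (𝓝 0)) :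
    (fun φ => ∫ x, |1 + φ x| ^ q ∂μ - μ.real univ - q * (q - 1) / 2 * ∫ x, φ x ^ 2 ∂μ) =o[l]
      fun φ => (eLpNorm φ (ENNReal.ofReal q) μ).toReal ^ 2 := by
  refine isLittleO_iff.2 fun c hc => ?_
  set B := μ.real univ ^ (1 - 2 / q)
  have hB : 0 ≤ B := Real.rpow_nonneg measureReal_nonneg _
  obtain ⟨C, hC⟩ := exists_abs_integral_rpow_one_add_sub_le (μ := μ) hq.le
    (η := c / (2 * (B + 1))) (by positivity)
  have hT := (isLittleO_integral_abs_rpow hq (hl.mono fun φ hφ => hφ.1.1) ht).def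
    (c := c / (2 * (|C| + 1))) (by positivity)
  filter_upwards [hl, hT] with φ ⟨hφ, hmean⟩ hTφ
  set N := (eLpNorm φ (ENNReal.ofReal q) μ).toReal
  have hS := integral_sq_le_measureReal_rpow_mul hq.le hφ
  have hT0 : 0 ≤ ∫ x, |φ x| ^ q ∂μ := integral_nonneg fun x => by positivity
  rw [Real.norm_of_nonneg hT0, Real.norm_of_nonneg (sq_nonneg _)] at hTφ
  rw [Real.norm_of_nonneg (sq_nonneg _), Real.norm_eq_abs]
  have h1 : c / (2 * (B + 1)) * ∫ x, φ x ^ 2 ∂μ ≤ c / 2 * N ^ 2 := by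
    calc c / (2 * (B + 1)) * ∫ x, φ x ^ 2 ∂μ ≤ c / (2 * (B + 1)) * ((B + 1) * N ^ 2) := by
          gcongr; nlinarith [sq_nonneg N]
      _ = c / 2 * N ^ 2 := by field_simp
  have h2 : C * ∫ x, |φ x| ^ q ∂μ ≤ c / 2 * N ^ 2 := by
    calc C * ∫ x, |φ x| ^ q ∂μ ≤ (|C| + 1) * ∫ x, |φ x| ^ q ∂μ := by
          gcongr; linarith [le_abs_self C]
      _ ≤ (|C| + 1) * (c / (2 * (|C| + 1)) * N ^ 2) := by gcongr
      _ = c / 2 * N ^ 2 := by field_simp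
  linarith [hC φ hφ hmean]

lemma isLittleO_toReal_eLpNorm_one_add_sq_sub (hμ : 0 < μ univ) (hq : 2 < q)
    (hl : ∀ᶠ φ in l, MemLp φ (ENNReal.ofReal q) μ ∧ ∫ x, φ x ∂μ = 0)
    (ht : Tendsto (fun φ => (eLpNorm φ (ENNReal.ofReal q) μ).toReal) l (𝓝 0)) :
    (fun φ => (eLpNorm (fun x => 1 + φ x) (ENNReal.ofReal q) μ).toReal ^ 2 -
        μ.real univ ^ (2 / q) - (q - 1) * μ.real univ ^ (2 / q - 1) * (eLpNorm φ 2 μ).toReal ^ 2)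
      =o[l] fun φ => (eLpNorm φ (ENNReal.ofReal q) μ).toReal ^ 2 := by
  set m := μ.real univ
  have hm : 0 < m := ENNReal.toReal_pos hμ.ne' (measure_ne_top μ univ)
  set A := fun φ : X → ℝ => ∫ x, |1 + φ x| ^ q ∂μ
  have hE := isLittleO_integral_rpow_one_add_sub hq hl ht
  have hAm :
      (fun φ => A φ - m) =O[l] fun φ => (eLpNorm φ (ENNReal.ofReal q) μ).toReal ^ 2 := by
    simpa using ((isBigO_integral_sq hq.le (hl.mono fun φ hφ => hφ.1)).const_mul_left
      (q * (q - 1) / 2)).add hE.isBigO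
  have hA : Tendsto A l (𝓝 m) :=
    tendsto_sub_nhds_zero_iff.mp (hAm.trans_tendsto (by simpa using ht.pow 2))
  have hTaylor := ((hasDerivAt_iff_isLittleO.mp (Real.hasDerivAt_rpow_const (p := 2 / q)
    (Or.inl hm.ne'))).comp_tendsto hA).trans_isBigO hAm
  refine (hTaylor.add (hE.const_mul_left (2 / q * m ^ (2 / q - 1)))).congr' ?_
    EventuallyEq.rfl
  filter_upwards [hl] with φ ⟨hφ, _⟩
  have hone_add : AEStronglyMeasurable (fun x => 1 + φ x) μ :=
    ((memLp_const (1 : ℝ)).add hφ).aestronglyMeasurable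
  rw [← Real.rpow_two, toReal_eLpNorm_ofReal_rpow (by linarith) hone_add,
    toReal_eLpNorm_two_sq hφ.aestronglyMeasurable]
  simp only [Function.comp, smul_eq_mul, A]
  field_simp
  ring

end

theorem lq_norm_second_order_expansion {X : Type*} [MeasurableSpace X] (μ : Measure X)
    (hpos : 0 < μ Set.univ) (hfin : μ Set.univ < ⊤) (q : ℝ) (hq : 2 < q) :
    ∀ ε : ℝ, 0 < ε → ∃ δ : ℝ, 0 < δ ∧ ∀ φ : X → ℝ,
      MemLp φ (ENNReal.ofReal q) μ → ∫ x, φ x ∂μ = 0 →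
      (eLpNorm φ (ENNReal.ofReal q) μ).toReal ≤ δ →
      |(eLpNorm (fun x => 1 + φ x) (ENNReal.ofReal q) μ).toReal ^ 2 -
          (μ Set.univ).toReal ^ (2 / q) -
          (q - 1) * (μ Set.univ).toReal ^ (2 / q - 1) * (eLpNorm φ 2 μ).toReal ^ 2| ≤
        ε * (eLpNorm φ (ENNReal.ofReal q) μ).toReal ^ 2 := by
  intro ε hε
  have : IsFiniteMeasure μ := ⟨hfin⟩
  set s := {φ : X → ℝ | MemLp φ (ENNReal.ofReal q) μ ∧ ∫ x, φ x ∂μ = 0}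
  set N := fun φ : X → ℝ => (eLpNorm φ (ENNReal.ofReal q) μ).toReal
  have hsmall := (isLittleO_toReal_eLpNorm_one_add_sq_sub (l := comap N (𝓝 0) ⊓ 𝓟 s) hpos hq
    (mem_inf_of_right (mem_principal_self s)) (tendsto_comap.mono_left inf_le_left)).def hε
  obtain ⟨δ, hδ, hδs⟩ :=
    ((Metric.nhds_basis_closedBall.comap N).inf_principal s).eventually_iff.mp hsmall
  refine ⟨δ, hδ, fun φ hφ hmean hφδ => ?_⟩
  have := hδs ⟨by simpa [N, abs_of_nonneg ENNReal.toReal_nonneg] using hφδ, hφ, hmean⟩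
  simpa [measureReal_def] using this
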